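/- arXiv:2408.15574 — 2 statements merged into one kernel-verified Lean document; each statement's English description precedes it below -/
import Mathlib

section
/- Let 1 < p < N and 0 < μ < ((N−p)/p)^p. Then the function g(γ) = (p−1)γ^p − (N−p)γ^{p−1} + μ has exactly two zeros γ₁ < γ₂ in the interval (0, ∞), and these satisfy 0 < γ₁ < (N−p)/p < γ₂ < (N−p)/(p−1). -/
theorem two_roots_of_hardy_polynomial
    (N p μ : ℝ) (hp : 1 < p) (hpN : p < N)
    (hμ : 0 < μ) (hμ' : μ < ((N - p) / p) ^ p) :
    ∃ γ₁ γ₂ : ℝ,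
      0 < γ₁ ∧ γ₁ < (N - p) / p ∧ (N - p) / p < γ₂ ∧ γ₂ < (N - p) / (p - 1) ∧
      (p - 1) * γ₁ ^ p - (N - p) * γ₁ ^ (p - 1) + μ = 0 ∧
      (p - 1) * γ₂ ^ p - (N - p) * γ₂ ^ (p - 1) + μ = 0 ∧
      ∀ γ : ℝ, 0 < γ → (p - 1) * γ ^ p - (N - p) * γ ^ (p - 1) + μ = 0 →
        γ = γ₁ ∨ γ = γ₂ := by
  have hp0 : (0:ℝ) < p := by linarith
  have hp1 : (0:ℝ) < p - 1 := by linarith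
  have hNp : (0:ℝ) < N - p := by linarith
  set c : ℝ := (N - p) / p with hc_def
  set d : ℝ := (N - p) / (p - 1) with hd_def
  have hc : 0 < c := div_pos hNp hp0
  have hd : 0 < d := div_pos hNp hp1
  have hcd : c < d := by
    rw [hc_def, hd_def, div_lt_div_iff₀ hp0 hp1]
    nlinarith
  set f : ℝ → ℝ := fun γ => (p - 1) * γ ^ p - (N - p) * γ ^ (p - 1) + μ with hf_def
  -- continuity
  have hcont : Continuous f := by
    apply Continuous.add _ continuous_const
    apply Continuous.sub
    · exact continuous_const.mul (continuous_iff_continuousAt.2 fun x =>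
        Real.continuousAt_rpow_const x p (Or.inr hp0.le))
    · exact continuous_const.mul (continuous_iff_continuousAt.2 fun x =>
        Real.continuousAt_rpow_const x (p-1) (Or.inr hp1.le))
  -- derivative
  have hderiv : ∀ x : ℝ, 0 < x →
      HasDerivAt f ((p - 1) * x ^ (p - 2) * (p * x - (N - p))) x := by
    intro x hx
    have h1 : HasDerivAt (fun y : ℝ => y ^ p) (p * x ^ (p - 1)) x :=
      Real.hasDerivAt_rpow_const (Or.inl hx.ne')
    have h2 : HasDerivAt (fun y : ℝ => y ^ (p - 1)) ((p - 1) * x ^ (p - 1 - 1)) x :=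
      Real.hasDerivAt_rpow_const (Or.inl hx.ne')
    have h3 := ((h1.const_mul (p - 1)).sub (h2.const_mul (N - p))).add_const μ
    have key : (p - 1) * (p * x ^ (p - 1)) - (N - p) * ((p - 1) * x ^ (p - 1 - 1))
        = (p - 1) * x ^ (p - 2) * (p * x - (N - p)) := by
      have e1 : x ^ (p - 1) = x ^ (p - 2) * x := by
        rw [show p - 1 = (p - 2) + 1 by ring, Real.rpow_add_one hx.ne']
      have e2 : p - 1 - 1 = p - 2 := by ring
      rw [e2, e1]; ring
    rw [key] at h3
    exact h3
  have hxpow : ∀ x : ℝ, 0 < x → 0 < x ^ (p - 2) := fun x hx => Real.rpow_pos_of_pos hx _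
  -- strict antitone on [0, c]
  have hanti : StrictAntiOn f (Set.Icc 0 c) := by
    apply strictAntiOn_of_deriv_neg (convex_Icc 0 c) hcont.continuousOn
    intro x hx
    rw [interior_Icc] at hx
    rw [(hderiv x hx.1).deriv]
    have hxc : p * x < N - p := by
      have := hx.2
      rw [hc_def, lt_div_iff₀ hp0] at this
      linarith [this]
    exact mul_neg_of_pos_of_neg (mul_pos hp1 (hxpow x hx.1)) (by linarith)
  -- strict monotone on [c, ∞)
  have hmono : StrictMonoOn f (Set.Ici c) := by
    apply strictMonoOn_of_deriv_pos (convex_Ici c) hcont.continuousOn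
    intro x hx
    rw [interior_Ici] at hx
    have hx0 : 0 < x := lt_trans hc hx
    rw [(hderiv x hx0).deriv]
    have hxc : N - p < p * x := by
      have := Set.mem_Ioi.mp hx
      rw [hc_def, div_lt_iff₀ hp0] at this
      linarith [this]
    exact mul_pos (mul_pos hp1 (hxpow x hx0)) (by linarith)
  -- values
  have hf0 : f 0 = μ := by
    simp only [hf_def]
    rw [Real.zero_rpow hp0.ne', Real.zero_rpow hp1.ne']
    ring
  have hcpow : c ^ p = c ^ (p - 1) * c := by
    rw [show p = (p - 1) + 1 by ring, Real.rpow_add_one hc.ne']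
    norm_num
  have hcc : (p - 1) * c - (N - p) = -c := by
    rw [hc_def]; field_simp; ring
  have hfc : f c = μ - c ^ p := by
    simp only [hf_def]
    rw [hcpow]
    linear_combination c ^ (p - 1) * hcc
  have hfc_neg : f c < 0 := by
    rw [hfc]; rw [hc_def] at *; linarith [hμ']
  have hdd : (p - 1) * d - (N - p) = 0 := by
    rw [hd_def]; field_simp; ring
  have hdpow : d ^ p = d ^ (p - 1) * d := by
    rw [show p = (p - 1) + 1 by ring, Real.rpow_add_one hd.ne']
    norm_num
  have hfd : f d = μ := by
    simp only [hf_def]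
    rw [hdpow]
    linear_combination d ^ (p - 1) * hdd
  -- first root
  have h1 : (0:ℝ) ∈ Set.Icc (f c) (f 0) := ⟨le_of_lt hfc_neg, by rw [hf0]; exact hμ.le⟩
  obtain ⟨γ₁, hγ₁mem, hγ₁⟩ := intermediate_value_Icc' hc.le hcont.continuousOn h1
  have hγ₁0 : 0 < γ₁ := by
    rcases lt_or_eq_of_le hγ₁mem.1 with h | h
    · exact h
    · exfalso; rw [← h] at hγ₁; rw [hf0] at hγ₁; linarith
  have hγ₁c : γ₁ < c := by
    rcases lt_or_eq_of_le hγ₁mem.2 with h | h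
    · exact h
    · exfalso; rw [h] at hγ₁; linarith
  -- second root
  have h2 : (0:ℝ) ∈ Set.Icc (f c) (f d) := ⟨le_of_lt hfc_neg, by rw [hfd]; exact hμ.le⟩
  obtain ⟨γ₂, hγ₂mem, hγ₂⟩ := intermediate_value_Icc hcd.le hcont.continuousOn h2
  have hγ₂c : c < γ₂ := by
    rcases lt_or_eq_of_le hγ₂mem.1 with h | h
    · exact h
    · exfalso; rw [← h] at hγ₂; linarith
  have hγ₂d : γ₂ < d := by
    rcases lt_or_eq_of_le hγ₂mem.2 with h | h
    · exact h
    · exfalso; rw [h] at hγ₂; rw [hfd] at hγ₂; linarith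
  refine ⟨γ₁, γ₂, hγ₁0, hγ₁c, hγ₂c, hγ₂d, hγ₁, hγ₂, ?_⟩
  intro γ hγ0 hγval
  have hfγ : f γ = 0 := hγval
  rcases lt_trichotomy γ c with h | h | h
  · left
    exact hanti.injOn ⟨hγ0.le, h.le⟩ ⟨hγ₁0.le, hγ₁c.le⟩ (by rw [hfγ, hγ₁])
  · exfalso; rw [h] at hfγ; linarith
  · right
    exact hmono.injOn (Set.mem_Ici.2 h.le) (Set.mem_Ici.2 hγ₂c.le) (by rw [hfγ, hγ₂])
end

section
/- Let N ≥ 2, 1 < p < N, 0 < μ < ((N−p)/p)^p, 0 < s < p, and let u be a solution of the doubly critical problem (★) that is radial: u(x) = f(|x|) for some continuously differentiable nonincreasing function f : (0, ∞) → (0, ∞). Then f′(r) < 0 for every r > 0. -/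
open MeasureTheory Real Filter Set Topology

noncomputable def pStarS (N p s : ℝ) : ℝ := (N - s) * p / (N - p)

def IsSolution (N : ℕ) (p μ s : ℝ) (u : EuclideanSpace ℝ (Fin N) → ℝ) : Prop :=
  (∀ x : EuclideanSpace ℝ (Fin N), x ≠ 0 → 0 < u x) ∧
  ContDiffOn ℝ 1 u {x : EuclideanSpace ℝ (Fin N) | x ≠ 0} ∧
  Integrable (fun x : EuclideanSpace ℝ (Fin N) => |u x| ^ ((N : ℝ) * p / ((N : ℝ) - p))) ∧
  Integrable (fun x : EuclideanSpace ℝ (Fin N) => ‖gradient u x‖ ^ p) ∧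
  ∀ φ : EuclideanSpace ℝ (Fin N) → ℝ, ContDiff ℝ 1 φ → HasCompactSupport φ →
    tsupport φ ⊆ {x : EuclideanSpace ℝ (Fin N) | x ≠ 0} →
    (∫ x : EuclideanSpace ℝ (Fin N),
        ‖gradient u x‖ ^ (p - 2) * (inner ℝ (gradient u x) (gradient φ x) : ℝ))
      - μ * ∫ x : EuclideanSpace ℝ (Fin N), ‖x‖ ^ (-p) * u x ^ (p - 1) * φ x
      = ∫ x : EuclideanSpace ℝ (Fin N), ‖x‖ ^ (-s) * u x ^ (pStarS N p s - 1) * φ x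


lemma aux_slope {g : ℝ → ℝ} {d x : ℝ} (hd : HasDerivAt g d x) :
    Tendsto (slope g x) (𝓝[>] x) (𝓝 d) :=
  (hasDerivAt_iff_tendsto_slope.1 hd).mono_left (nhdsWithin_mono x fun y hy => ne_of_gt hy)

lemma aux_deriv_nonneg_of_monotone {g : ℝ → ℝ} {d x : ℝ} (hg : Monotone g)
    (hd : HasDerivAt g d x) : 0 ≤ d := by
  refine ge_of_tendsto (aux_slope hd) ?_
  filter_upwards [self_mem_nhdsWithin] with y hy
  simp only [Set.mem_Ioi] at hy
  have h1 : g x ≤ g y := hg (le_of_lt hy)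
  have := div_nonneg (by linarith : (0:ℝ) ≤ g y - g x) (by linarith : (0:ℝ) ≤ y - x)
  simpa [slope_def_field, div_eq_iff] using this

lemma aux_deriv_nonpos_of_antitoneOn {g : ℝ → ℝ} {d t : ℝ} (ht : 0 < t)
    (hg : AntitoneOn g (Set.Ioi 0)) (hd : HasDerivAt g d t) : d ≤ 0 := by
  refine le_of_tendsto (aux_slope hd) ?_
  filter_upwards [self_mem_nhdsWithin] with y hy
  simp only [Set.mem_Ioi] at hy
  have h1 : g y ≤ g t := hg (Set.mem_Ioi.2 ht) (Set.mem_Ioi.2 (ht.trans hy)) hy.le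
  have := div_nonpos_of_nonpos_of_nonneg (by linarith : g y - g t ≤ 0) (by linarith : (0:ℝ) ≤ y - t)
  simpa [slope_def_field, div_eq_iff] using this

lemma aux_mono_expNegInvGlue : Monotone expNegInvGlue := by
  intro x y hxy
  by_cases hx : x ≤ 0
  · rw [expNegInvGlue.zero_of_nonpos hx]; exact expNegInvGlue.nonneg y
  · push_neg at hx
    have hy : ¬ y ≤ 0 := by push_neg; linarith
    unfold expNegInvGlue
    rw [if_neg (not_le.2 hx), if_neg hy]
    apply Real.exp_le_exp.2
    have : y⁻¹ ≤ x⁻¹ := by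
      apply inv_anti₀ hx hxy
    linarith

lemma aux_mono_smoothTransition : Monotone Real.smoothTransition := by
  intro x y hxy
  unfold Real.smoothTransition
  rw [div_le_div_iff₀ (Real.smoothTransition.pos_denom x) (Real.smoothTransition.pos_denom y)]
  have h1 : expNegInvGlue x ≤ expNegInvGlue y := aux_mono_expNegInvGlue hxy
  have h2 : expNegInvGlue (1 - y) ≤ expNegInvGlue (1 - x) := aux_mono_expNegInvGlue (by linarith)
  have h3 := expNegInvGlue.nonneg x
  have h4 := expNegInvGlue.nonneg (1 - y)
  have h5 := expNegInvGlue.nonneg y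
  nlinarith

lemma aux_cont_of_contOn {F : ℝ → ℝ} {O K : Set ℝ} (hO : IsOpen O) (hK : IsClosed K)
    (hKO : K ⊆ O) (h0 : ∀ t, t ∉ K → F t = 0) (hF : ContinuousOn F O) : Continuous F := by
  rw [continuous_iff_continuousAt]
  intro t
  by_cases ht : t ∈ O
  · exact hF.continuousAt (hO.mem_nhds ht)
  · have htK : t ∈ Kᶜ := fun h => ht (hKO h)
    have : F =ᶠ[𝓝 t] (fun _ => 0) := by
      filter_upwards [hK.isOpen_compl.mem_nhds htK] with y hy using h0 y hy
    exact (continuousAt_const.congr this.symm)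

section aux
variable {E : Type*} [NormedAddCommGroup E] [InnerProductSpace ℝ E]

lemma aux_hasFDerivAt_norm {x : E} (hx : x ≠ 0) :
    HasFDerivAt (fun y : E => ‖y‖) (‖x‖⁻¹ • innerSL ℝ x) x := by
  have hsq : HasFDerivAt (fun y : E => ‖y‖ ^ 2) (2 • innerSL ℝ x) x :=
    (hasStrictFDerivAt_norm_sq x).hasFDerivAt
  have hpos : (0:ℝ) < ‖x‖ := norm_pos_iff.2 hx
  have hne : (‖x‖ : ℝ) ^ 2 ≠ 0 := by positivity
  have hsqrt : HasDerivAt Real.sqrt (1 / (2 * Real.sqrt (‖x‖ ^ 2))) (‖x‖ ^ 2) :=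
    Real.hasDerivAt_sqrt hne
  have hcomp := hsqrt.comp_hasFDerivAt x hsq
  have heq : Real.sqrt ∘ (fun y : E => ‖y‖ ^ 2) = fun y : E => ‖y‖ := by
    funext y; simp [Function.comp, Real.sqrt_sq (norm_nonneg y)]
  rw [heq] at hcomp
  refine hcomp.congr_fderiv ?_
  rw [Real.sqrt_sq (norm_nonneg x)]
  ext y
  simp only [ContinuousLinearMap.coe_smul', Pi.smul_apply, ContinuousLinearMap.smul_apply,
    smul_eq_mul, nsmul_eq_mul]
  ring

lemma aux_hasGradientAt_comp_norm [CompleteSpace E] {g : ℝ → ℝ} {d : ℝ} {x : E} (hx : x ≠ 0)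
    (hg : HasDerivAt g d ‖x‖) :
    HasGradientAt (fun y : E => g ‖y‖) ((d * ‖x‖⁻¹) • x) x := by
  have h := hg.comp_hasFDerivAt x (aux_hasFDerivAt_norm hx)
  rw [hasGradientAt_iff_hasFDerivAt]
  have heq : (g ∘ fun y : E => ‖y‖) = fun y : E => g ‖y‖ := rfl
  rw [heq] at h
  refine h.congr_fderiv ?_
  ext y
  simp only [InnerProductSpace.toDual_apply_apply, ContinuousLinearMap.coe_smul', Pi.smul_apply,
    innerSL_apply_apply, smul_eq_mul, real_inner_smul_left]
  ring
end aux

lemma key_identity (N : ℕ) (hN : 2 ≤ N) (p μ s : ℝ)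
    (hp : 1 < p) (hpN : p < (N : ℝ)) (hs : 0 < s) (hsp : s < p)
    (u : EuclideanSpace ℝ (Fin N) → ℝ) (hu : IsSolution N p μ s u)
    (f : ℝ → ℝ)
    (hfreg : ContDiffOn ℝ 1 f (Set.Ioi (0 : ℝ)))
    (hradial : ∀ x : EuclideanSpace ℝ (Fin N), x ≠ 0 → u x = f ‖x‖)
    (η : ℝ → ℝ) (hη1 : ContDiff ℝ 1 η) (hη2 : HasCompactSupport η)
    (hη3 : tsupport η ⊆ Set.Ioi (0:ℝ)) :
    (∫ t in Set.Ioi (0:ℝ), (t : ℝ) ^ (N - 1) * (|deriv f t| ^ (p - 2) * (deriv f t * deriv η t)))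
      = μ * (∫ t in Set.Ioi (0:ℝ), (t : ℝ) ^ (N - 1) * (t ^ (-p) * f t ^ (p - 1) * η t))
        + (∫ t in Set.Ioi (0:ℝ),
            (t : ℝ) ^ (N - 1) * (t ^ (-s) * f t ^ (pStarS N p s - 1) * η t)) := by
  classical
  haveI : Nonempty (Fin N) := ⟨⟨0, by omega⟩⟩
  haveI : Nontrivial (EuclideanSpace ℝ (Fin N)) := by
    apply Module.nontrivial_of_finrank_pos (R := ℝ)
    rw [finrank_euclideanSpace_fin]
    omega
  -- small radius δ
  obtain ⟨δ, hδpos, hδ⟩ : ∃ δ > 0, ∀ t : ℝ, |t| < δ → η t = 0 := by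
    have h0 : (0:ℝ) ∈ (tsupport η)ᶜ := fun h => lt_irrefl (0:ℝ) (hη3 h)
    obtain ⟨δ, hδpos, hball⟩ := Metric.isOpen_iff.1 (isClosed_tsupport η).isOpen_compl 0 h0
    exact ⟨δ, hδpos, fun t ht => image_eq_zero_of_notMem_tsupport
      (hball (by simpa [Real.dist_eq] using ht))⟩
  -- the test function
  set φ : EuclideanSpace ℝ (Fin N) → ℝ := fun x => η ‖x‖ with hφdef
  have hφ1 : ContDiff ℝ 1 φ := by
    rw [contDiff_iff_contDiffAt]
    intro x
    by_cases hx : ‖x‖ < δ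
    · have : φ =ᶠ[𝓝 x] fun _ => 0 := by
        filter_upwards [Metric.ball_mem_nhds x (show (0:ℝ) < δ - ‖x‖ by linarith)] with y hy
        have : ‖y‖ < δ := by
          have := norm_sub_norm_le y x
          have hd : dist y x < δ - ‖x‖ := hy
          rw [dist_eq_norm] at hd
          linarith [abs_le.1 (abs_norm_sub_norm_le y x)]
        exact hδ ‖y‖ (by rwa [abs_of_nonneg (norm_nonneg y)])
      exact (contDiffAt_const (c := (0:ℝ))).congr_of_eventuallyEq this
    · push_neg at hx
      have hx0 : x ≠ 0 := by
        intro h; rw [h, norm_zero] at hx; linarith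
      exact (hη1.contDiffAt).comp x (contDiffAt_norm (𝕜 := ℝ) hx0)
  obtain ⟨R, hR⟩ : ∃ R : ℝ, tsupport η ⊆ Set.Icc (-R) R := by
    obtain ⟨R, hR⟩ := (hη2.isBounded).subset_closedBall 0
    exact ⟨R, fun t ht => by simpa [Real.closedBall_eq_Icc] using hR ht⟩
  have hφ2 : HasCompactSupport φ := by
    apply HasCompactSupport.intro (isCompact_closedBall (0 : EuclideanSpace ℝ (Fin N)) R)
    intro x hx
    simp only [Metric.mem_closedBall, dist_zero_right, not_le] at hx
    show η ‖x‖ = 0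
    apply image_eq_zero_of_notMem_tsupport
    intro hmem
    have := (hR hmem).2
    linarith
  have hφ3 : tsupport φ ⊆ {x : EuclideanSpace ℝ (Fin N) | x ≠ 0} := by
    have hsupp : Function.support φ ⊆ {x : EuclideanSpace ℝ (Fin N) | δ ≤ ‖x‖} := by
      intro x hx
      by_contra h
      simp only [Set.mem_setOf_eq, not_le] at h
      exact hx (hδ ‖x‖ (by rwa [abs_of_nonneg (norm_nonneg x)]))
    have hclosed : IsClosed {x : EuclideanSpace ℝ (Fin N) | δ ≤ ‖x‖} := by
      have : {x : EuclideanSpace ℝ (Fin N) | δ ≤ ‖x‖} = (fun x : EuclideanSpace ℝ (Fin N) => ‖x‖) ⁻¹' Set.Ici δ := rfl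
      rw [this]; exact IsClosed.preimage continuous_norm isClosed_Ici
    intro x hx
    have := closure_minimal hsupp hclosed hx
    simp only [Set.mem_setOf_eq] at this ⊢
    intro h; rw [h, norm_zero] at this; linarith
  -- derivatives
  have hfd : ∀ t : ℝ, 0 < t → HasDerivAt f (deriv f t) t := by
    intro t ht
    have h1 : DifferentiableWithinAt ℝ f (Set.Ioi 0) t :=
      (hfreg t ht).differentiableWithinAt one_ne_zero
    exact (h1.differentiableAt (Ioi_mem_nhds ht)).hasDerivAt
  have hηd : ∀ t : ℝ, HasDerivAt η (deriv η t) t := fun t =>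
    ((hη1.differentiable one_ne_zero) t).hasDerivAt
  have hgradu : ∀ x : EuclideanSpace ℝ (Fin N), x ≠ 0 → gradient u x = (deriv f ‖x‖ * ‖x‖⁻¹) • x := by
    intro x hx
    have hr : 0 < ‖x‖ := norm_pos_iff.2 hx
    have h1 : HasGradientAt (fun y : EuclideanSpace ℝ (Fin N) => f ‖y‖) ((deriv f ‖x‖ * ‖x‖⁻¹) • x) x :=
      aux_hasGradientAt_comp_norm hx (hfd _ hr)
    have h2 : HasGradientAt u ((deriv f ‖x‖ * ‖x‖⁻¹) • x) x := by
      rw [hasGradientAt_iff_hasFDerivAt] at h1 ⊢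
      apply h1.congr_of_eventuallyEq
      filter_upwards [isOpen_ne.mem_nhds hx] with y hy
      exact hradial y hy
    exact h2.gradient
  have hgradφ : ∀ x : EuclideanSpace ℝ (Fin N), x ≠ 0 → gradient φ x = (deriv η ‖x‖ * ‖x‖⁻¹) • x := fun x hx =>
    (aux_hasGradientAt_comp_norm hx (hηd _)).gradient
  -- a.e. nonzero
  have h00 : (volume : Measure (EuclideanSpace ℝ (Fin N))) {0} = 0 := measure_singleton 0
  have hne : ∀ᵐ (x : EuclideanSpace ℝ (Fin N)) ∂volume, x ≠ 0 := by
    rw [ae_iff]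
    convert h00 using 2
    ext x; simp
  -- polar coordinates
  set κ : ℝ := (N : ℝ) * (volume (Metric.ball (0 : EuclideanSpace ℝ (Fin N)) 1)).toReal with hκdef
  have hκpos : 0 < κ := by
    apply mul_pos (by positivity)
    apply ENNReal.toReal_pos
    · exact (Metric.measure_ball_pos volume (0 : EuclideanSpace ℝ (Fin N)) one_pos).ne'
    · exact (measure_ball_lt_top).ne
  have hpolar : ∀ F : ℝ → ℝ, (∫ x : EuclideanSpace ℝ (Fin N), F ‖x‖)
      = κ * ∫ t in Set.Ioi (0:ℝ), (t : ℝ) ^ (N - 1) * F t := by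
    intro F
    rw [MeasureTheory.integral_fun_norm_addHaar (volume : Measure (EuclideanSpace ℝ (Fin N))) F]
    simp only [finrank_euclideanSpace_fin, nsmul_eq_mul, smul_eq_mul, hκdef]
    rw [measureReal_def]
    ring
  -- the three integrand identities
  set F1 : ℝ → ℝ := fun t => |deriv f t| ^ (p - 2) * (deriv f t * deriv η t) with hF1
  set F2 : ℝ → ℝ := fun t => t ^ (-p) * f t ^ (p - 1) * η t with hF2
  set F3 : ℝ → ℝ := fun t => t ^ (-s) * f t ^ (pStarS N p s - 1) * η t with hF3
  have hI1 : (∫ x : EuclideanSpace ℝ (Fin N), ‖gradient u x‖ ^ (p - 2) * (inner ℝ (gradient u x) (gradient φ x) : ℝ))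
      = ∫ x : EuclideanSpace ℝ (Fin N), F1 ‖x‖ := by
    apply integral_congr_ae
    filter_upwards [hne] with x hx
    have hr : 0 < ‖x‖ := norm_pos_iff.2 hx
    rw [hgradu x hx, hgradφ x hx]
    have hb : ‖(deriv f ‖x‖ * ‖x‖⁻¹) • x‖ = |deriv f ‖x‖| := by
      rw [norm_smul, Real.norm_eq_abs, abs_mul, abs_inv, abs_of_pos hr]
      field_simp
    have hinner : (inner ℝ ((deriv f ‖x‖ * ‖x‖⁻¹) • x) ((deriv η ‖x‖ * ‖x‖⁻¹) • x) : ℝ)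
        = deriv f ‖x‖ * deriv η ‖x‖ := by
      rw [real_inner_smul_left, real_inner_smul_right, real_inner_self_eq_norm_mul_norm]
      field_simp
    rw [hb, hinner, hF1]
  have hI2 : (∫ x : EuclideanSpace ℝ (Fin N), ‖x‖ ^ (-p) * u x ^ (p - 1) * φ x) = ∫ x : EuclideanSpace ℝ (Fin N), F2 ‖x‖ := by
    apply integral_congr_ae
    filter_upwards [hne] with x hx
    rw [hF2]
    simp only [hφdef]
    rw [hradial x hx]
  have hI3 : (∫ x : EuclideanSpace ℝ (Fin N), ‖x‖ ^ (-s) * u x ^ (pStarS N p s - 1) * φ x) = ∫ x : EuclideanSpace ℝ (Fin N), F3 ‖x‖ := by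
    apply integral_congr_ae
    filter_upwards [hne] with x hx
    rw [hF3]
    simp only [hφdef]
    rw [hradial x hx]
  have hw := hu.2.2.2.2 φ hφ1 hφ2 hφ3
  rw [hI1, hI2, hI3, hpolar F1, hpolar F2, hpolar F3] at hw
  have hgoal : κ * (∫ t in Set.Ioi (0:ℝ), (t:ℝ) ^ (N-1) * F1 t)
      = κ * ((μ * ∫ t in Set.Ioi (0:ℝ), (t:ℝ) ^ (N-1) * F2 t)
        + ∫ t in Set.Ioi (0:ℝ), (t:ℝ) ^ (N-1) * F3 t) := by
    ring_nf
    ring_nf at hw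
    linarith
  exact mul_left_cancel₀ hκpos.ne' hgoal

theorem radial_solution_strictly_decreasing
    (N : ℕ) (hN : 2 ≤ N) (p μ s : ℝ)
    (hp : 1 < p) (hpN : p < (N : ℝ))
    (hμ : 0 < μ) (hμ' : μ < (((N : ℝ) - p) / p) ^ p)
    (hs : 0 < s) (hsp : s < p)
    (u : EuclideanSpace ℝ (Fin N) → ℝ) (hu : IsSolution N p μ s u)
    (f : ℝ → ℝ)
    (hfpos : ∀ r : ℝ, 0 < r → 0 < f r)
    (hfreg : ContDiffOn ℝ 1 f (Set.Ioi (0 : ℝ)))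
    (hfmono : AntitoneOn f (Set.Ioi (0 : ℝ)))
    (hradial : ∀ x : EuclideanSpace ℝ (Fin N), x ≠ 0 → u x = f ‖x‖) :
    ∀ r : ℝ, 0 < r → deriv f r < 0 := by
  intro r hr
  have hfd : ∀ t : ℝ, 0 < t → HasDerivAt f (deriv f t) t := by
    intro t ht
    exact (((hfreg t ht).differentiableWithinAt one_ne_zero).differentiableAt
      (Ioi_mem_nhds ht)).hasDerivAt
  have hder_nonpos : ∀ t : ℝ, 0 < t → deriv f t ≤ 0 := fun t ht =>
    aux_deriv_nonpos_of_antitoneOn ht hfmono (hfd t ht)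
  rcases (hder_nonpos r hr).lt_or_eq with hlt | h0
  · exact hlt
  exfalso
  have hp1 : (0:ℝ) < p - 1 := by linarith
  set G : ℝ → ℝ := fun t => (t:ℝ) ^ (N - 1) * (|deriv f t| ^ (p - 2) * deriv f t) with hG
  set Gabs : ℝ → ℝ := fun t => (t:ℝ) ^ (N - 1) * |deriv f t| ^ (p - 1) with hGabs
  have habs : ∀ d : ℝ, d ≤ 0 → |d| ^ (p - 2) * d = -(|d| ^ (p - 1)) := by
    intro d hd
    rcases hd.lt_or_eq with hd' | hd'
    · have h1 : 0 < |d| := abs_pos.2 hd'.ne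
      have h2 : |d| ^ (p - 1) = |d| ^ (p - 2) * |d| := by
        rw [show p - 1 = (p - 2) + 1 by ring, Real.rpow_add_one h1.ne']
      rw [h2, abs_of_neg hd']
      ring
    · subst hd'
      simp [Real.zero_rpow (show p - 1 ≠ 0 by linarith)]
  have hGeqIoi : ∀ t ∈ Set.Ioi (0:ℝ), G t = -(Gabs t) := by
    intro t _
    simp only [hG, hGabs]
    rw [habs _ (hder_nonpos t (by assumption))]
    ring
  have hGabsnonneg : ∀ t ∈ Set.Ioi (0:ℝ), 0 ≤ Gabs t := by
    intro t ht
    exact mul_nonneg (pow_nonneg (le_of_lt ht) _) (Real.rpow_nonneg (abs_nonneg _) _)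
  have hGnonpos : ∀ t ∈ Set.Ioi (0:ℝ), G t ≤ 0 := by
    intro t ht
    rw [hGeqIoi t ht]
    linarith [hGabsnonneg t ht]
  have hf'cont : ContinuousOn (deriv f) (Set.Ioi 0) :=
    hfreg.continuousOn_deriv_of_isOpen isOpen_Ioi le_rfl
  have hGabscont : ContinuousOn Gabs (Set.Ioi 0) := by
    apply ContinuousOn.mul ((continuous_pow _).continuousOn)
    exact (hf'cont.abs).rpow_const (fun t _ => Or.inr hp1.le)
  have hGcont : ContinuousOn G (Set.Ioi 0) := (hGabscont.neg).congr hGeqIoi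
  have hfc : ContinuousOn f (Set.Ioi 0) := hfreg.continuousOn
  set q : ℝ := pStarS N p s with hq
  set H3 : ℝ → ℝ := fun t => (t:ℝ) ^ (N - 1) * (t ^ (-s) * f t ^ (q - 1)) with hH3
  have hH3cont : ContinuousOn H3 (Set.Ioi 0) := by
    apply ContinuousOn.mul ((continuous_pow _).continuousOn)
    apply ContinuousOn.mul
    · exact ContinuousOn.rpow_const continuousOn_id (fun t ht => Or.inl (ne_of_gt ht))
    · exact hfc.rpow_const (fun t ht => Or.inl (hfpos t ht).ne')
  have hH3pos : ∀ t ∈ Set.Ioi (0:ℝ), 0 < H3 t := by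
    intro t ht
    exact mul_pos (pow_pos ht _)
      (mul_pos (Real.rpow_pos_of_pos ht _) (Real.rpow_pos_of_pos (hfpos t ht) _))
  set c : ℝ := ∫ t in (3*r/4)..r, H3 t with hc
  have h34 : (0:ℝ) < 3*r/4 := by linarith
  have h34r : 3*r/4 < r := by linarith
  have hIccsub : Set.uIcc (3*r/4) r ⊆ Set.Ioi (0:ℝ) := by
    rw [Set.uIcc_of_le h34r.le]
    intro t ht
    exact lt_of_lt_of_le h34 ht.1
  have hH3int : IntervalIntegrable H3 volume (3*r/4) r :=
    (hH3cont.mono hIccsub).intervalIntegrable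
  have hcpos : 0 < c := by
    rw [hc]
    apply intervalIntegral.intervalIntegral_pos_of_pos_on hH3int _ h34r
    intro t ht
    exact hH3pos t (lt_trans h34 ht.1)
  -- choose ε
  have hGabsr : Gabs r = 0 := by
    simp [hGabs, h0, Real.zero_rpow (show p - 1 ≠ 0 by linarith)]
  have hev : ∀ᶠ t in 𝓝 r, Gabs t < c/2 := by
    have hca : ContinuousAt Gabs r := hGabscont.continuousAt (Ioi_mem_nhds hr)
    have h1 : Tendsto Gabs (𝓝 r) (𝓝 0) := by rw [← hGabsr]; exact hca
    exact h1.eventually_lt_const (by linarith)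
  obtain ⟨δ, hδpos, hδ⟩ := Metric.eventually_nhds_iff.1 hev
  set ε : ℝ := min (δ/2) (r/4) with hε
  have hεpos : 0 < ε := lt_min (by linarith) (by linarith)
  have hεr4 : ε ≤ r/4 := min_le_right _ _
  have hεδ : ε < δ := lt_of_le_of_lt (min_le_left _ _) (by linarith)
  have hGsmall : ∀ t ∈ Set.Icc r (r+ε), Gabs t ≤ c/2 := by
    intro t ht
    apply le_of_lt (hδ _)
    rw [Real.dist_eq, abs_of_nonneg (by linarith [ht.1] : (0:ℝ) ≤ t - r)]
    linarith [ht.2]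
  -- smooth transition facts
  set χ : ℝ → ℝ := Real.smoothTransition with hχ
  have hχdiff : Differentiable ℝ χ :=
    (Real.smoothTransition.contDiff (n := 1)).differentiable (by norm_num)
  set D : ℝ → ℝ := deriv χ with hD
  have hχd : ∀ y, HasDerivAt χ (D y) y := fun y => (hχdiff y).hasDerivAt
  have hDnonneg : ∀ y, 0 ≤ D y := fun y =>
    aux_deriv_nonneg_of_monotone aux_mono_smoothTransition (hχd y)
  have hDcont : Continuous D :=
    (Real.smoothTransition.contDiff (n := 1)).continuous_deriv le_rfl
  have hDlt : ∀ y : ℝ, y < 0 → D y = 0 := by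
    intro y hy
    have hEq : χ =ᶠ[𝓝 y] fun _ => (0:ℝ) := by
      filter_upwards [Iio_mem_nhds hy] with z hz
      exact Real.smoothTransition.zero_of_nonpos (le_of_lt hz)
    rw [hD, hEq.deriv_eq, deriv_const]
  have hDgt : ∀ y : ℝ, 1 < y → D y = 0 := by
    intro y hy
    have hEq : χ =ᶠ[𝓝 y] fun _ => (1:ℝ) := by
      filter_upwards [Ioi_mem_nhds hy] with z hz
      exact Real.smoothTransition.one_of_one_le (le_of_lt hz)
    rw [hD, hEq.deriv_eq, deriv_const]
  have hDle : ∀ y : ℝ, y ≤ 0 → D y = 0 := by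
    intro y hy
    rcases hy.lt_or_eq with h | h
    · exact hDlt y h
    · subst h
      have h1 : Tendsto D (𝓝[<] (0:ℝ)) (𝓝 (D 0)) :=
        (hDcont.continuousAt).tendsto.mono_left nhdsWithin_le_nhds
      have h2 : Tendsto D (𝓝[<] (0:ℝ)) (𝓝 0) := by
        apply Tendsto.congr' _ tendsto_const_nhds
        filter_upwards [self_mem_nhdsWithin] with z hz
        exact (hDlt z hz).symm
      exact tendsto_nhds_unique h1 h2
  have hDge : ∀ y : ℝ, 1 ≤ y → D y = 0 := by
    intro y hy
    rcases hy.lt_or_eq with h | h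
    · exact hDgt y h
    · subst h
      have h1 : Tendsto D (𝓝[>] (1:ℝ)) (𝓝 (D 1)) :=
        (hDcont.continuousAt).tendsto.mono_left nhdsWithin_le_nhds
      have h2 : Tendsto D (𝓝[>] (1:ℝ)) (𝓝 0) := by
        apply Tendsto.congr' _ tendsto_const_nhds
        filter_upwards [self_mem_nhdsWithin] with z hz
        exact (hDgt z hz).symm
      exact tendsto_nhds_unique h1 h2
  -- the test function
  set a : ℝ := r/2 with ha
  have hapos : 0 < a := by rw [ha]; linarith
  have har : a < r := by rw [ha]; linarith
  set η : ℝ → ℝ := fun t => χ ((t - a)/ε) - χ ((t - r)/ε) with hηdef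
  set ρa : ℝ → ℝ := fun t => D ((t - a)/ε) * (1/ε) with hρa
  set ρr : ℝ → ℝ := fun t => D ((t - r)/ε) * (1/ε) with hρr
  have hin : ∀ (cc t : ℝ), HasDerivAt (fun t : ℝ => (t - cc)/ε) (1/ε) t := by
    intro cc t
    simpa using ((hasDerivAt_id t).sub_const cc).div_const ε
  have hcompa : ∀ t : ℝ, HasDerivAt (fun t : ℝ => χ ((t - a)/ε)) (ρa t) t := by
    intro t
    simpa [Function.comp_def, hρa] using (hχd ((t - a)/ε)).comp t (hin a t)
  have hcompr : ∀ t : ℝ, HasDerivAt (fun t : ℝ => χ ((t - r)/ε)) (ρr t) t := by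
    intro t
    simpa [Function.comp_def, hρr] using (hχd ((t - r)/ε)).comp t (hin r t)
  have hηd : ∀ t, HasDerivAt η (ρa t - ρr t) t := fun t => (hcompa t).sub (hcompr t)
  have hηderiv : ∀ t, deriv η t = ρa t - ρr t := fun t => (hηd t).deriv
  have hη1 : ContDiff ℝ 1 η := by
    apply ContDiff.sub
    · exact (Real.smoothTransition.contDiff).comp ((contDiff_id.sub contDiff_const).div_const ε)
    · exact (Real.smoothTransition.contDiff).comp ((contDiff_id.sub contDiff_const).div_const ε)
  have hηzero : ∀ t, t ∉ Set.Icc a (r + ε) → η t = 0 := by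
    intro t ht
    rw [Set.mem_Icc, not_and_or] at ht
    simp only [hηdef, hχ]
    rcases ht with h | h
    · push_neg at h
      rw [Real.smoothTransition.zero_of_nonpos
          (div_nonpos_of_nonpos_of_nonneg (by linarith) hεpos.le),
        Real.smoothTransition.zero_of_nonpos
          (div_nonpos_of_nonpos_of_nonneg (by linarith) hεpos.le), sub_self]
    · push_neg at h
      rw [Real.smoothTransition.one_of_one_le (by rw [le_div_iff₀ hεpos]; linarith),
        Real.smoothTransition.one_of_one_le (by rw [le_div_iff₀ hεpos]; linarith), sub_self]
  have hη2 : HasCompactSupport η := HasCompactSupport.intro isCompact_Icc hηzero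
  have hη3 : tsupport η ⊆ Set.Ioi (0:ℝ) := by
    have h1 : Function.support η ⊆ Set.Icc a (r+ε) := fun t ht => by
      by_contra h
      exact ht (hηzero t h)
    exact (closure_minimal h1 isClosed_Icc).trans (fun t ht => lt_of_lt_of_le hapos ht.1)
  have hηnonneg : ∀ t, 0 ≤ η t := by
    intro t
    simp only [hηdef, hχ]
    have h1 : (t - r)/ε ≤ (t - a)/ε := by
      apply (div_le_div_iff_of_pos_right hεpos).2
      linarith
    linarith [aux_mono_smoothTransition h1]
  have hη_one : ∀ t ∈ Set.Icc (3*r/4) r, η t = 1 := by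
    intro t ht
    simp only [hηdef, hχ]
    rw [Real.smoothTransition.one_of_one_le
        (by rw [le_div_iff₀ hεpos]; rw [ha]; linarith [ht.1, hεr4]),
      Real.smoothTransition.zero_of_nonpos
        (div_nonpos_of_nonpos_of_nonneg (by linarith [ht.2]) hεpos.le), sub_zero]
  -- supports of bumps
  have hρanonneg : ∀ t, 0 ≤ ρa t := fun t =>
    mul_nonneg (hDnonneg _) (by positivity)
  have hρrnonneg : ∀ t, 0 ≤ ρr t := fun t =>
    mul_nonneg (hDnonneg _) (by positivity)
  have hρazero : ∀ t, t ∉ Set.Icc a (a+ε) → ρa t = 0 := by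
    intro t ht
    rw [Set.mem_Icc, not_and_or] at ht
    simp only [hρa]
    rcases ht with h | h
    · push_neg at h
      rw [hDle _ (div_nonpos_of_nonpos_of_nonneg (by linarith) hεpos.le), zero_mul]
    · push_neg at h
      rw [hDge _ (by rw [le_div_iff₀ hεpos]; linarith), zero_mul]
  have hρrzero : ∀ t, t ∉ Set.Icc r (r+ε) → ρr t = 0 := by
    intro t ht
    rw [Set.mem_Icc, not_and_or] at ht
    simp only [hρr]
    rcases ht with h | h
    · push_neg at h
      rw [hDle _ (div_nonpos_of_nonpos_of_nonneg (by linarith) hεpos.le), zero_mul]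
    · push_neg at h
      rw [hDge _ (by rw [le_div_iff₀ hεpos]; linarith), zero_mul]
  have hρacont : Continuous ρa := by
    apply Continuous.mul _ continuous_const
    exact hDcont.comp ((continuous_id.sub continuous_const).div_const ε)
  have hρrcont : Continuous ρr := by
    apply Continuous.mul _ continuous_const
    exact hDcont.comp ((continuous_id.sub continuous_const).div_const ε)
  -- integrability helper
  have hint : ∀ (W : ℝ → ℝ) (l v : ℝ), 0 < l → ContinuousOn W (Set.Ioi 0) →
      (∀ t, t ∉ Set.Icc l v → W t = 0) → Integrable W := by
    intro W l v hl hWc hW0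
    have hcont : Continuous W := aux_cont_of_contOn isOpen_Ioi isClosed_Icc
      (fun t ht => lt_of_lt_of_le hl ht.1) hW0 hWc
    exact hcont.integrable_of_hasCompactSupport (HasCompactSupport.intro isCompact_Icc hW0)
  have hintGa : Integrable (fun t => G t * ρa t) := by
    apply hint _ a (a+ε) hapos (hGcont.mul hρacont.continuousOn)
    intro t ht
    show G t * ρa t = 0
    rw [hρazero t ht, mul_zero]
  have hintGr : Integrable (fun t => G t * ρr t) := by
    apply hint _ r (r+ε) hr (hGcont.mul hρrcont.continuousOn)
    intro t ht
    show G t * ρr t = 0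
    rw [hρrzero t ht, mul_zero]
  have hintCr : Integrable (fun t => (c/2) * ρr t) := by
    apply hint _ r (r+ε) hr ((hρrcont.continuousOn).const_smul (c/2))
    intro t ht
    show (c/2) * ρr t = 0
    rw [hρrzero t ht, mul_zero]
  -- apply the weak identity
  have hkey := key_identity N hN p μ s hp hpN hs hsp u hu f hfreg hradial η hη1 hη2 hη3
  have hLHS : (∫ t in Set.Ioi (0:ℝ),
        (t:ℝ) ^ (N - 1) * (|deriv f t| ^ (p - 2) * (deriv f t * deriv η t)))
      = (∫ t in Set.Ioi (0:ℝ), G t * ρa t) - ∫ t in Set.Ioi (0:ℝ), G t * ρr t := by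
    rw [← integral_sub hintGa.integrableOn hintGr.integrableOn]
    apply setIntegral_congr_fun measurableSet_Ioi
    intro t _
    show (t:ℝ) ^ (N - 1) * (|deriv f t| ^ (p - 2) * (deriv f t * deriv η t))
      = G t * ρa t - G t * ρr t
    rw [hηderiv t]
    simp only [hG]
    ring
  -- A ≤ 0
  have hA : (∫ t in Set.Ioi (0:ℝ), G t * ρa t) ≤ 0 := by
    apply setIntegral_nonpos measurableSet_Ioi
    intro t ht
    have h1 := hGnonpos t ht
    have h2 := hρanonneg t
    nlinarith
  -- ∫ ρr = 1
  have hρr1 : (∫ t in Set.Ioi (0:ℝ), ρr t) = 1 := by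
    have h1 : (∫ t in Set.Ioi (0:ℝ), ρr t) = ∫ t : ℝ, ρr t := by
      apply setIntegral_eq_integral_of_forall_compl_eq_zero
      intro t ht
      simp only [Set.mem_Ioi, not_lt] at ht
      apply hρrzero
      rw [Set.mem_Icc, not_and_or]
      left
      push_neg
      linarith
    have h2 : Function.support ρr ⊆ Set.Ioc r (r+ε) := by
      intro t ht
      by_contra hmem
      apply ht
      rw [Set.mem_Ioc, not_and_or] at hmem
      rcases hmem with h | h
      · push_neg at h
        rcases h.lt_or_eq with h' | h'
        · exact hρrzero t (by rw [Set.mem_Icc, not_and_or]; left; push_neg; exact h')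
        · simp only [hρr, ← h', sub_self, zero_div]
          rw [hDle 0 le_rfl, zero_mul]
      · push_neg at h
        exact hρrzero t (by rw [Set.mem_Icc, not_and_or]; right; push_neg; exact h)
    rw [h1, ← intervalIntegral.integral_eq_integral_of_support_subset h2]
    have h3 : ∀ t ∈ Set.uIcc r (r+ε), HasDerivAt (fun t : ℝ => χ ((t - r)/ε)) (ρr t) t :=
      fun t _ => hcompr t
    rw [intervalIntegral.integral_eq_sub_of_hasDerivAt h3
      ((hρrcont.continuousOn).intervalIntegrable)]
    simp only [hχ]
    rw [show (r + ε - r)/ε = 1 by field_simp; ring, show (r - r)/ε = 0 by simp]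
    rw [Real.smoothTransition.one, Real.smoothTransition.zero, sub_zero]
  -- |B| ≤ c/2
  have hBabs : |∫ t in Set.Ioi (0:ℝ), G t * ρr t| ≤ c/2 := by
    have h1 : |∫ t in Set.Ioi (0:ℝ), G t * ρr t| ≤ ∫ t in Set.Ioi (0:ℝ), |G t * ρr t| := by
      have := norm_integral_le_integral_norm
        (μ := volume.restrict (Set.Ioi 0)) (fun t => G t * ρr t)
      simp only [Real.norm_eq_abs] at this
      exact this
    have h2 : (∫ t in Set.Ioi (0:ℝ), |G t * ρr t|) ≤ ∫ t in Set.Ioi (0:ℝ), (c/2) * ρr t := by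
      apply setIntegral_mono_on hintGr.abs.integrableOn hintCr.integrableOn measurableSet_Ioi
      intro t ht
      show |G t * ρr t| ≤ (c/2) * ρr t
      by_cases hmem : t ∈ Set.Icc r (r+ε)
      · rw [abs_mul, abs_of_nonneg (hρrnonneg t)]
        apply mul_le_mul_of_nonneg_right _ (hρrnonneg t)
        rw [hGeqIoi t ht, abs_neg, abs_of_nonneg (hGabsnonneg t ht)]
        exact hGsmall t hmem
      · rw [hρrzero t hmem, mul_zero, abs_zero, mul_zero]
    have h3 : (∫ t in Set.Ioi (0:ℝ), (c/2) * ρr t) = c/2 := by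
      rw [integral_const_mul, hρr1, mul_one]
    linarith
  -- μ * I2 ≥ 0
  have hI2nonneg : 0 ≤ ∫ t in Set.Ioi (0:ℝ), (t:ℝ) ^ (N - 1) * (t ^ (-p) * f t ^ (p - 1) * η t) := by
    apply setIntegral_nonneg measurableSet_Ioi
    intro t ht
    have h2 : (0:ℝ) ≤ t ^ (-p) := Real.rpow_nonneg (le_of_lt ht) _
    have h3 : (0:ℝ) ≤ f t ^ (p-1) := Real.rpow_nonneg (hfpos t ht).le _
    exact mul_nonneg (pow_nonneg ht.le _) (mul_nonneg (mul_nonneg h2 h3) (hηnonneg t))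
  -- I3 ≥ c
  have hI3ge : c ≤ ∫ t in Set.Ioi (0:ℝ),
      (t:ℝ) ^ (N - 1) * (t ^ (-s) * f t ^ (pStarS N p s - 1) * η t) := by
    have hbig : Integrable (fun t => (t:ℝ) ^ (N - 1) * (t ^ (-s) * f t ^ (pStarS N p s - 1) * η t)) := by
      apply hint _ a (r+ε) hapos
      · apply ContinuousOn.mul ((continuous_pow _).continuousOn)
        apply ContinuousOn.mul
        · apply ContinuousOn.mul
          · exact ContinuousOn.rpow_const continuousOn_id (fun t ht => Or.inl (ne_of_gt ht))
          · exact hfc.rpow_const (fun t ht => Or.inl (hfpos t ht).ne')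
        · exact hη1.continuous.continuousOn
      · intro t ht
        rw [hηzero t ht, mul_zero, mul_zero]
    have h1 : (∫ t in Set.Icc (3*r/4) r,
          (t:ℝ) ^ (N - 1) * (t ^ (-s) * f t ^ (pStarS N p s - 1) * η t))
        ≤ ∫ t in Set.Ioi (0:ℝ),
          (t:ℝ) ^ (N - 1) * (t ^ (-s) * f t ^ (pStarS N p s - 1) * η t) := by
      apply setIntegral_mono_set hbig.integrableOn
      · apply Filter.Eventually.of_forall
        intro t
        show (0:ℝ) ≤ (t:ℝ) ^ (N - 1) * (t ^ (-s) * f t ^ (pStarS N p s - 1) * η t)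
        by_cases ht : t ∈ Set.Ioi (0:ℝ)
        · exact mul_nonneg (pow_nonneg (le_of_lt ht) _)
            (mul_nonneg (mul_nonneg (Real.rpow_nonneg (le_of_lt ht) _)
              (Real.rpow_nonneg (hfpos t ht).le _)) (hηnonneg t))
        · simp only [Set.mem_Ioi, not_lt] at ht
          rw [hηzero t (by rw [Set.mem_Icc, not_and_or]; left; push_neg; linarith),
            mul_zero, mul_zero]
      · apply Filter.Eventually.of_forall
        intro t ht
        exact lt_of_lt_of_le h34 ht.1
    have h2 : (∫ t in Set.Icc (3*r/4) r,
          (t:ℝ) ^ (N - 1) * (t ^ (-s) * f t ^ (pStarS N p s - 1) * η t))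
        = ∫ t in Set.Icc (3*r/4) r, H3 t := by
      apply setIntegral_congr_fun measurableSet_Icc
      intro t ht
      show (t:ℝ) ^ (N - 1) * (t ^ (-s) * f t ^ (pStarS N p s - 1) * η t) = H3 t
      rw [hη_one t ht]
      simp only [hH3, hq]
      ring
    have h3 : (∫ t in Set.Icc (3*r/4) r, H3 t) = c := by
      rw [hc, intervalIntegral.integral_of_le h34r.le, integral_Icc_eq_integral_Ioc]
    linarith
  rw [hLHS] at hkey
  have hB := abs_le.1 hBabs
  linarith [hB.1, hkey, hA, hI2nonneg, hI3ge, mul_nonneg hμ.le hI2nonneg]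
end
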